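/- arXiv:2605.13288 — 3 statements merged into one kernel-verified Lean document; each statement's English description precedes it below -/
import Mathlib

section
/- Let π : G → C_k be the abelianization map of a finite group G (so ker π = G', the commutator subgroup), let π_k : C_{kn} → C_k be the natural projection, and let G_n be the pullback of π and π_k in G × C_{kn}. Then the second projection pr_2 : G_n → C_{kn} is surjective and its kernel is the commutator subgroup of G_n; i.e., pr_2 is the abelianization of G_n, so the abelianization of G_n is cyclic of order kn. -/
/-- The natural projection `C_{kn} → C_k` (written multiplicatively). -/
def cycProj (k n : ℕ) : Multiplicative (ZMod (k * n)) →* Multiplicative (ZMod k) :=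
  AddMonoidHom.toMultiplicative (ZMod.castHom (dvd_mul_right k n) (ZMod k)).toAddMonoidHom

/-- The pullback `G_n = {(z,w) ∈ G × C_{kn} : π(z) = π_k(w)}`. -/
def pullbackSubgroup (G : Type*) [Group G] (k n : ℕ)
    (π : G →* Multiplicative (ZMod k)) : Subgroup (G × Multiplicative (ZMod (k * n))) :=
  MonoidHom.eqLocus (π.comp (MonoidHom.fst _ _)) ((cycProj k n).comp (MonoidHom.snd _ _))

open scoped commutatorElement

/-- Let `π : G → C_k` be the abelianization map of a finite group `G`
(surjective with kernel the commutator subgroup `G'`), and let `G_n` be the pullback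
of `π` and the projection `π_k : C_{kn} → C_k`.  Then the second projection
`pr_2 : G_n → C_{kn}` is surjective and its kernel is the commutator subgroup of
`G_n`; hence `pr_2` is the abelianization of `G_n`, whose abelianization is thus
cyclic of order `kn`. -/
theorem stmt_9 (k n : ℕ) (hk : 0 < k) (hn : 0 < n)
    (G : Type*) [Group G] [Finite G]
    (π : G →* Multiplicative (ZMod k)) (hπ : Function.Surjective π)
    (hker : π.ker = commutator G) :
    let P := pullbackSubgroup G k n π
    (∀ w : Multiplicative (ZMod (k * n)), ∃ z : G, (z, w) ∈ P) ∧
    (∀ (zw : G × Multiplicative (ZMod (k * n))) (h : zw ∈ P),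
      (zw.2 = 1 ↔ (⟨zw, h⟩ : P) ∈ commutator P)) ∧
    Nat.card (Abelianization P) = k * n := by
  intro P
  haveI : NeZero k := ⟨hk.ne'⟩
  haveI : NeZero (k * n) := ⟨(Nat.mul_pos hk hn).ne'⟩
  -- surjectivity of pr₂
  have hsurj : ∀ w : Multiplicative (ZMod (k * n)), ∃ z : G, (z, w) ∈ P := by
    intro w
    obtain ⟨z, hz⟩ := hπ (cycProj k n w)
    exact ⟨z, hz⟩
  -- lifting: every g : G lifts into P
  have hlift : ∀ g : G, ∃ w, (g, w) ∈ P := by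
    intro g
    refine ⟨Multiplicative.ofAdd (((π g).toAdd.val : ℕ) : ZMod (k * n)), ?_⟩
    show π g = cycProj k n _
    simp [cycProj, ZMod.natCast_val, ZMod.cast_id]
  -- the map pr₂ restricted to P
  set f : P →* Multiplicative (ZMod (k * n)) :=
    (MonoidHom.snd G _).comp P.subtype with hf
  have hfsurj : Function.Surjective f := by
    intro w
    obtain ⟨z, hz⟩ := hsurj w
    exact ⟨⟨(z, w), hz⟩, rfl⟩
  -- kernel equals commutator
  have hiff : ∀ (zw : G × Multiplicative (ZMod (k * n))) (h : zw ∈ P),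
      (zw.2 = 1 ↔ (⟨zw, h⟩ : P) ∈ commutator P) := by
    intro zw h
    constructor
    · intro h2
      obtain ⟨z, w⟩ := zw
      dsimp at h2
      subst h2
      -- z ∈ commutator G
      have hz : z ∈ commutator G := by
        rw [← hker, MonoidHom.mem_ker]
        have : π z = cycProj k n 1 := h
        simpa using this
      -- (z,1) ∈ commutator of P mapped into ambient group
      have key : (z, (1 : Multiplicative (ZMod (k * n)))) ∈
          (commutator P).map P.subtype := by
        have hmap : (commutator P).map P.subtype = ⁅P, P⁆ := by
          rw [commutator, Subgroup.map_commutator, ← MonoidHom.range_eq_map, Subgroup.range_subtype]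
        rw [hmap]
        have hle : commutator G ≤
            (⁅P, P⁆ : Subgroup (G × Multiplicative (ZMod (k * n)))).comap
              (MonoidHom.inl G _) := by
          rw [commutator]
          rw [Subgroup.commutator_le]
          intro a _ b _
          obtain ⟨wa, hwa⟩ := hlift a
          obtain ⟨wb, hwb⟩ := hlift b
          have : ⁅(a, wa), (b, wb)⁆ ∈ ⁅P, P⁆ :=
            Subgroup.commutator_mem_commutator hwa hwb
          have heq : ⁅(a, wa), (b, wb)⁆ = (⁅a, b⁆, (1 : Multiplicative (ZMod (k * n)))) := by
            have : ⁅wa, wb⁆ = 1 := by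
              rw [commutatorElement_def]
              exact mul_comm wa wb ▸ by group
            simp [commutatorElement_def, Prod.ext_iff, this]
          rw [heq] at this
          exact this
        exact hle hz
      obtain ⟨x, hx, hxe⟩ := key
      have : x = (⟨(z, 1), h⟩ : P) := Subtype.ext hxe
      rwa [this] at hx
    · intro hc
      have : f ⟨zw, h⟩ = 1 :=
        (Abelianization.commutator_subset_ker f) hc
      exact this
  refine ⟨hsurj, hiff, ?_⟩
  -- cardinality
  have hkerf : f.ker = commutator P := by
    ext x
    rw [MonoidHom.mem_ker]
    obtain ⟨zw, h⟩ := x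
    exact hiff zw h
  haveI : (commutator P).Normal := inferInstance
  calc Nat.card (Abelianization P)
      = Nat.card (P ⧸ f.ker) :=
        Nat.card_congr (QuotientGroup.quotientMulEquivOfEq hkerf.symm).toEquiv
    _ = Nat.card (Multiplicative (ZMod (k * n))) :=
        Nat.card_congr (QuotientGroup.quotientKerEquivOfSurjective f hfsurj).toEquiv
    _ = k * n := by simp [Nat.card_eq_fintype_card, ZMod.card]
end

section
/- Let G be a finite group whose abelianization is cyclic of order k, and suppose G has weight one. Let G_n be the pullback of the abelianization π : G → C_k along the projection π_k : C_{kn} → C_k. Then G_n also has weight one. -/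
open scoped commutatorElement

lemma prod_commutator {G H : Type*} [Group G] [Group H] (p q : G × H) :
    ⁅p, q⁆ = (⁅p.1, q.1⁆, ⁅p.2, q.2⁆) := by simp [commutatorElement_def, Prod.ext_iff]

/-- Let `G` be a finite group of weight one whose abelianization is
cyclic of order `k` (with abelianization map `π : G → C_k`), and let `G_n` be the
pullback of `π` along the projection `C_{kn} → C_k`.  Then `G_n` also has weight
one, i.e. it is the normal closure of a single element. -/
theorem stmt_10 (k n : ℕ) (hk : 0 < k) (hn : 0 < n)
    (G : Type*) [Group G] [Finite G]
    (π : G →* Multiplicative (ZMod k)) (hπ : Function.Surjective π)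
    (hker : π.ker = commutator G)
    (hw : ∃ g : G, Subgroup.normalClosure {g} = ⊤) :
    ∃ c : pullbackSubgroup G k n π, Subgroup.normalClosure {c} = ⊤ := by
  obtain ⟨g, hg⟩ := hw
  haveI : NeZero k := ⟨hk.ne'⟩
  haveI : NeZero (k * n) := ⟨(Nat.mul_pos hk hn).ne'⟩
  set P := pullbackSubgroup G k n π with hP
  -- π g generates C_k
  have hgen : Subgroup.zpowers (π g) = ⊤ := by
    have h1 : Subgroup.map π (Subgroup.normalClosure {g}) = Subgroup.normalClosure {π g} := by
      rw [Subgroup.map_normalClosure _ _ hπ, Set.image_singleton]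
    rw [hg, Subgroup.map_top_of_surjective _ hπ] at h1
    have h2 : Subgroup.normalClosure {π g} ≤ Subgroup.zpowers (π g) :=
      Subgroup.normalClosure_le_normal (by
        simp only [Set.singleton_subset_iff, SetLike.mem_coe]
        exact Subgroup.mem_zpowers _)
    exact top_le_iff.mp (h1 ▸ h2)
  -- the additive version of π g is a unit of ZMod k
  have hu : IsUnit (Multiplicative.toAdd (π g)) := by
    obtain ⟨m, hm⟩ : (Multiplicative.ofAdd (1 : ZMod k)) ∈ Subgroup.zpowers (π g) := by
      rw [hgen]; trivial
    have : (m : ZMod k) * Multiplicative.toAdd (π g) = 1 := by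
      have := congrArg Multiplicative.toAdd hm
      simpa [toAdd_zpow, zsmul_eq_mul] using this
    exact IsUnit.of_mul_eq_one _ (by rw [mul_comm]; exact this)
  -- lift to a unit of ZMod (k*n)
  obtain ⟨W, hW⟩ := ZMod.unitsMap_surjective (dvd_mul_right k n) hu.unit
  set w0 : ZMod (k * n) := (W : ZMod (k * n)) with hw0
  have hcast : ZMod.castHom (dvd_mul_right k n) (ZMod k) w0 = Multiplicative.toAdd (π g) := by
    have : ((ZMod.unitsMap (dvd_mul_right k n) W : (ZMod k)ˣ) : ZMod k)
        = (hu.unit : ZMod k) := by rw [hW]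
    simpa [ZMod.unitsMap_def, hu.unit_spec] using this
  set wM : Multiplicative (ZMod (k * n)) := Multiplicative.ofAdd w0 with hwM
  have hc : (g, wM) ∈ P := by
    show π g = cycProj k n wM
    show π g = Multiplicative.ofAdd (ZMod.castHom (dvd_mul_right k n) (ZMod k) w0)
    rw [hcast]; rfl
  -- wM generates C_{kn}
  have hgenM : ∀ v : Multiplicative (ZMod (k * n)), ∃ m : ℤ, wM ^ m = v := by
    intro v
    refine ⟨((Multiplicative.toAdd v * ((W⁻¹ : (ZMod (k*n))ˣ) : ZMod (k*n))).val : ℕ), ?_⟩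
    apply Multiplicative.toAdd.injective
    rw [toAdd_zpow]
    rw [zsmul_eq_mul]
    push_cast
    rw [ZMod.natCast_rightInverse _]
    show Multiplicative.toAdd v * _ * w0 = Multiplicative.toAdd v
    rw [mul_assoc]
    have : ((W⁻¹ : (ZMod (k*n))ˣ) : ZMod (k*n)) * w0 = 1 := by
      rw [hw0, ← Units.val_mul, inv_mul_cancel, Units.val_one]
    rw [this, mul_one]
  -- every element of G lifts to P
  have hlift : ∀ z : G, ∃ v, (z, v) ∈ P := by
    intro z
    refine ⟨Multiplicative.ofAdd ((Multiplicative.toAdd (π z)).val : ZMod (k * n)), ?_⟩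
    show π z = cycProj k n _
    show π z = Multiplicative.ofAdd (ZMod.castHom (dvd_mul_right k n) (ZMod k)
      ((Multiplicative.toAdd (π z)).val : ZMod (k * n)))
    rw [map_natCast, ZMod.natCast_rightInverse _]
    rfl
  set c : P := ⟨(g, wM), hc⟩ with hcdef
  set N := Subgroup.normalClosure {c} with hN
  have hcN : c ∈ N := Subgroup.subset_normalClosure rfl
  haveI : N.Normal := Subgroup.normalClosure_normal
  refine ⟨c, ?_⟩
  set K : Subgroup G :=
    Subgroup.comap (MonoidHom.inl G (Multiplicative (ZMod (k * n)))) (N.map P.subtype) with hK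
  -- all commutators [x, g] lie in K
  have hK1 : ∀ x : G, ⁅x, g⁆ ∈ K := by
    intro x
    obtain ⟨vx, hvx⟩ := hlift x
    set px : P := ⟨(x, vx), hvx⟩ with hpx
    have hcomm : ⁅px, c⁆ ∈ N := by
      rw [commutatorElement_def]
      exact N.mul_mem (‹N.Normal›.conj_mem c hcN px) (N.inv_mem hcN)
    refine Subgroup.mem_comap.mpr ⟨⁅px, c⁆, hcomm, ?_⟩
    show (P.subtype ⁅px, c⁆) = (⁅x, g⁆, 1)
    rw [map_commutatorElement]
    show ⁅((x, vx) : G × Multiplicative (ZMod (k*n))), ((g, wM) : G × Multiplicative (ZMod (k*n)))⁆ = _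
    rw [prod_commutator]
    exact Prod.ext rfl (commutatorElement_eq_one_iff_commute.mpr (mul_comm _ _))
  -- K is normal in G
  have hKnorm : K.Normal := by
    constructor
    intro z hz y
    obtain ⟨p, hpN, hp⟩ := Subgroup.mem_comap.mp hz
    obtain ⟨vy, hvy⟩ := hlift y
    set py : P := ⟨(y, vy), hvy⟩ with hpy
    refine Subgroup.mem_comap.mpr ⟨py * p * py⁻¹, ‹N.Normal›.conj_mem p hpN py, ?_⟩
    have : P.subtype p = (z, 1) := hp
    show P.subtype (py * p * py⁻¹) = (y * z * y⁻¹, 1)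
    rw [map_mul, map_mul, map_inv, this]
    show ((y, vy) : G × Multiplicative (ZMod (k*n))) * (z, 1) * (y, vy)⁻¹ = (y * z * y⁻¹, 1)
    ext <;> simp
  haveI := hKnorm
  -- commutator G ≤ K, via the quotient G/K
  have hcommK : commutator G ≤ K := by
    set θ := QuotientGroup.mk' K with hθ
    have hθsurj : Function.Surjective θ := QuotientGroup.mk'_surjective K
    have hcent : ∀ x : G, Commute (θ x) (θ g) := by
      intro x
      apply commutatorElement_eq_one_iff_commute.mp
      rw [← map_commutatorElement]
      exact (QuotientGroup.eq_one_iff _).mpr (hK1 x)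
    have hzn : (Subgroup.zpowers (θ g)).Normal := by
      constructor
      intro a ha y
      obtain ⟨m, rfl⟩ := Subgroup.mem_zpowers_iff.mp ha
      obtain ⟨x, rfl⟩ := hθsurj y
      rw [((hcent x).zpow_right m).eq, mul_assoc, mul_inv_cancel, mul_one]
      exact ha
    have hncl : Subgroup.normalClosure {θ g} = ⊤ := by
      have h1 : Subgroup.map θ (Subgroup.normalClosure {g}) = Subgroup.normalClosure {θ g} := by
        rw [Subgroup.map_normalClosure _ _ hθsurj, Set.image_singleton]
      rw [hg, Subgroup.map_top_of_surjective _ hθsurj] at h1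
      exact h1.symm
    have hzp : Subgroup.zpowers (θ g) = ⊤ := by
      haveI := hzn
      refine top_le_iff.mp ?_
      rw [← hncl]
      exact Subgroup.normalClosure_le_normal (by
        simp only [Set.singleton_subset_iff, SetLike.mem_coe]
        exact Subgroup.mem_zpowers _)
    rw [commutator_eq_closure, Subgroup.closure_le]
    rintro z ⟨a, b, rfl⟩
    show ⁅a, b⁆ ∈ K
    refine (QuotientGroup.eq_one_iff _).mp ?_
    show θ ⁅a, b⁆ = 1
    rw [map_commutatorElement]
    obtain ⟨ma, hma⟩ : θ a ∈ Subgroup.zpowers (θ g) := by rw [hzp]; trivial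
    obtain ⟨mb, hmb⟩ : θ b ∈ Subgroup.zpowers (θ g) := by rw [hzp]; trivial
    rw [← hma, ← hmb]
    exact commutatorElement_eq_one_iff_commute.mpr ((Commute.refl (θ g)).zpow_zpow ma mb)
  -- conclude
  rw [eq_top_iff]
  rintro p -
  obtain ⟨⟨z, v⟩, hp⟩ := p
  obtain ⟨m, hm⟩ := hgenM v
  -- z * (g^m)⁻¹ is in the kernel of π
  have hπz : π z = (π g) ^ m := by
    have h1 : π z = cycProj k n v := hp
    have h2 : π g = cycProj k n wM := hc
    rw [h1, ← hm, map_zpow, ← h2]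
  have hkerm : z * (g ^ m)⁻¹ ∈ π.ker := by
    rw [MonoidHom.mem_ker, map_mul, map_inv, map_zpow, hπz, mul_inv_cancel]
  have hKm : z * (g ^ m)⁻¹ ∈ K := hcommK (hker ▸ hkerm)
  obtain ⟨pn, hpnN, hpn⟩ := Subgroup.mem_comap.mp hKm
  have hq : (⟨(z, v), hp⟩ : P) = pn * c ^ m := by
    apply Subtype.ext
    have h1 : P.subtype pn = (z * (g ^ m)⁻¹, 1) := hpn
    show ((z, v) : G × Multiplicative (ZMod (k*n))) = P.subtype (pn * c ^ m)
    rw [map_mul, map_zpow, h1]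
    show _ = (z * (g ^ m)⁻¹, 1) * ((g, wM) : G × Multiplicative (ZMod (k*n))) ^ m
    ext
    · simp
    · show v = 1 * wM ^ m
      rw [one_mul, hm]
  rw [hq]
  exact N.mul_mem hpnN (N.zpow_mem hcN m)
end

section
/- Let K be a finitely presented group with abelianization φ : K → ℤ (surjective), let G be a finite group with abelianization π : G → C_k of cyclic order k, and let G_n be the pullback of π and the projection π_k : C_{kn} → C_k. Given any epimorphism f_1 : K → G, the map f_n : K → G_n defined by f_n(u) = (f_1(u), φ(u) mod kn) is a well-defined group epimorphism satisfying pr_1 ∘ f_n = f_1. -/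
/-- Let `K` be a finitely presented group with surjective
abelianization `φ : K → ℤ`, let `G` be a finite group with abelianization
`π : G → C_k`, compatible with `φ` and a given epimorphism `f₁ : K → G`
(i.e. `π ∘ f₁` is `φ` followed by reduction mod `k`), and let `G_n` be the pullback
of `π` and `π_k : C_{kn} → C_k`.  Then `f_n(u) = (f₁(u), φ(u) mod kn)` is a
well-defined group epimorphism `K → G_n` with `pr_1 ∘ f_n = f₁`. -/
theorem stmt_11 (k n : ℕ) (hk : 0 < k) (hn : 0 < n)
    (K : Type*) [Group K] (hfp : Group.FG K)
    (φ : K →* Multiplicative ℤ) (hφ : Function.Surjective φ)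
    (hφker : φ.ker = commutator K)
    (G : Type*) [Group G] [Finite G]
    (π : G →* Multiplicative (ZMod k)) (hπ : Function.Surjective π)
    (hπker : π.ker = commutator G)
    (f₁ : K →* G) (hf₁ : Function.Surjective f₁)
    (hcomp : ∀ u : K, π (f₁ u) =
      Multiplicative.ofAdd ((Multiplicative.toAdd (φ u) : ℤ) : ZMod k)) :
    ∃ fn : K →* pullbackSubgroup G k n π,
      Function.Surjective fn ∧
      ∀ u : K, (fn u : G × Multiplicative (ZMod (k * n))) =
        (f₁ u, Multiplicative.ofAdd ((Multiplicative.toAdd (φ u) : ℤ) : ZMod (k * n))) := by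
  haveI : NeZero (k * n) := ⟨Nat.mul_ne_zero hk.ne' hn.ne'⟩
  -- the second component map
  set ψ : K →* Multiplicative (ZMod (k * n)) :=
    (AddMonoidHom.toMultiplicative (Int.castAddHom (ZMod (k * n)))).comp φ with hψ
  have hψap : ∀ u : K, ψ u =
      Multiplicative.ofAdd ((Multiplicative.toAdd (φ u) : ℤ) : ZMod (k * n)) := fun u => rfl
  have hmem : ∀ u : K, (f₁ u, ψ u) ∈ pullbackSubgroup G k n π := by
    intro u
    show π (f₁ u) = cycProj k n (ψ u)
    rw [hcomp u]
    show _ = Multiplicative.ofAdd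
      ((ZMod.castHom (dvd_mul_right k n) (ZMod k)) ((Multiplicative.toAdd (φ u) : ℤ) : ZMod (k * n)))
    exact congrArg Multiplicative.ofAdd
      (map_intCast (ZMod.castHom (dvd_mul_right k n) (ZMod k)) _).symm
  set fn : K →* pullbackSubgroup G k n π :=
    ((f₁.prod ψ).codRestrict _ hmem) with hfn
  have hval : ∀ u : K, (fn u : G × Multiplicative (ZMod (k * n))) = (f₁ u, ψ u) :=
    fun u => rfl
  refine ⟨fn, ?_, fun u => hval u⟩
  -- surjectivity
  -- key: any element of commutator G lifts to commutator K
  have hmapcomm : (commutator K).map f₁ = commutator G := by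
    rw [commutator, commutator, Subgroup.map_commutator,
      Subgroup.map_top_of_surjective f₁ hf₁]
  -- key: for any d : ℤ there is v ∈ ker f₁ with φ v = ofAdd (k*d)
  have hker : ∀ d : ℤ, ∃ v : K, f₁ v = 1 ∧ φ v = Multiplicative.ofAdd ((k : ℤ) * d) := by
    intro d
    obtain ⟨x, hx⟩ := hφ (Multiplicative.ofAdd ((k : ℤ) * d))
    have hx1 : f₁ x ∈ commutator G := by
      rw [← hπker, MonoidHom.mem_ker, hcomp x, hx]
      have : (((k : ℤ) * d : ℤ) : ZMod k) = 0 := by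
        push_cast
        simp [ZMod.natCast_self]
      simp [this]
    rw [← hmapcomm] at hx1
    obtain ⟨c, hc, hcx⟩ := hx1
    refine ⟨c⁻¹ * x, ?_, ?_⟩
    · rw [map_mul, map_inv, hcx, inv_mul_cancel]
    · have hcφ : φ c = 1 := by
        have : c ∈ φ.ker := by rw [hφker]; exact hc
        exact this
      rw [map_mul, map_inv, hcφ, inv_one, one_mul, hx]
  rintro ⟨⟨z, w⟩, hzw⟩
  have hzw' : π z = cycProj k n w := hzw
  obtain ⟨u₀, hu₀⟩ := hf₁ z
  set a : ℤ := Multiplicative.toAdd (φ u₀) with ha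
  set b : ℤ := ((Multiplicative.toAdd w).val : ℤ) with hb
  have hbw : ((b : ℤ) : ZMod (k * n)) = Multiplicative.toAdd w := by
    rw [hb]
    push_cast [ZMod.natCast_val, ZMod.cast_id]
    rfl
  have hcast : (ZMod.castHom (dvd_mul_right k n) (ZMod k)) (Multiplicative.toAdd w)
      = ((b : ℤ) : ZMod k) := by
    rw [← hbw, map_intCast]
  have hmod : ((a : ℤ) : ZMod k) = ((b : ℤ) : ZMod k) := by
    have h1 : Multiplicative.ofAdd ((a : ℤ) : ZMod k) = π z := by
      rw [← hu₀]; exact (hcomp u₀).symm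
    have h2 : cycProj k n w = Multiplicative.ofAdd
        ((ZMod.castHom (dvd_mul_right k n) (ZMod k)) (Multiplicative.toAdd w)) := rfl
    have h3 := h1.trans (hzw'.trans (h2.trans (congrArg Multiplicative.ofAdd hcast)))
    exact Multiplicative.ofAdd.injective h3
  have hdvd : (k : ℤ) ∣ (b - a) := by
    rw [ZMod.intCast_eq_intCast_iff] at hmod
    exact hmod.dvd
  obtain ⟨d, hd⟩ := hdvd
  obtain ⟨v, hv1, hv2⟩ := hker d
  refine ⟨u₀ * v, ?_⟩
  have h1 : f₁ (u₀ * v) = z := by rw [map_mul, hu₀, hv1, mul_one]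
  have h2 : ψ (u₀ * v) = w := by
    have hφuv : φ (u₀ * v) = Multiplicative.ofAdd b := by
      have hab : a + (k : ℤ) * d = b := by linarith [hd]
      have hu : φ u₀ = Multiplicative.ofAdd a := (ofAdd_toAdd _).symm
      rw [map_mul, hv2, hu, ← ofAdd_add, hab]
    rw [hψap, hφuv, toAdd_ofAdd, hbw, ofAdd_toAdd]
  apply Subtype.ext
  rw [hval]
  exact Prod.ext h1 h2
end
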